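/- Consider the 5-simplex on vertices {1,...,6} and the Pachner move 1–5 configurations: the left side is the single pentachoron 12345 with its five tetrahedra B = {2345, 1345, 1245, 1235, 1234}, and the right side consists of the five pentachora {12346, 12356, 12456, 13456, 23456}, whose interior tetrahedra are the ten tetrahedra containing vertex 6. A permitted ℤ-coloring of the right side is an assignment (x_t, y_t) ∈ ℤ × ℤ to every tetrahedron t that is a face of its pentachora such that 𝐲_u = ℛ𝐱_u for each of the five pentachora. Then for every permitted ℤ-coloring of the pentachoron 12345 (i.e. every (x_t, y_t) on B with 𝐲_{12345} = ℛ𝐱_{12345}), the set of permitted colorings of the right side agreeing with it on B is in bijection with ℤ⁴ (four additional ℤ-degrees of freedom). -/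

import Mathlib

/- The Pachner move 1–5 inside the 5-simplex with vertex set `Fin 6`
   (vertices 1,…,6 of the paper are 0,…,5 here). -/

/-- The matrix ℛ from the paper. -/
def Rmat : Matrix (Fin 5) (Fin 5) ℤ :=
  !![0, -2, 1, 1, -2;
     0, -1, 0, 1, -1;
     -1, 2, -2, 0, 1;
     -1, 3, -2, -1, 2;
     0, 1, -1, 0, 0]

/-- The five tetrahedral faces `jklm, iklm, ijlm, ijkm, ijkl` of the
pentachoron `ijklm = abcde`. -/
def pentFaces (a b c d e : Fin 6) : Fin 5 → Finset (Fin 6) :=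
  ![{b, c, d, e}, {a, c, d, e}, {a, b, d, e}, {a, b, c, e}, {a, b, c, d}]

/-- A ℤ-coloring `t ↦ (x_t, y_t)` is permitted on the pentachoron `abcde`
iff `𝐲_u = ℛ 𝐱_u`, where ℛ acts with integer coefficients. -/
def IsPermitted (f : Finset (Fin 6) → ℤ × ℤ) (a b c d e : Fin 6) : Prop :=
  ∀ i : Fin 5,
    (f (pentFaces a b c d e i)).2 =
      ∑ j : Fin 5, Rmat i j * (f (pentFaces a b c d e j)).1

/-- Permitted coloring of the right side of the move 1–5: the pentachora
`12346, 12356, 12456, 13456, 23456`. -/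
def PermittedRight (f : Finset (Fin 6) → ℤ × ℤ) : Prop :=
  IsPermitted f 0 1 2 3 5 ∧ IsPermitted f 0 1 2 4 5 ∧ IsPermitted f 0 1 3 4 5 ∧
    IsPermitted f 0 2 3 4 5 ∧ IsPermitted f 1 2 3 4 5

/-- The boundary: the five tetrahedra `B = {2345, 1345, 1245, 1235, 1234}` of
the single left-side pentachoron `12345`. -/
def Bdry : Finset (Finset (Fin 6)) :=
  {{1, 2, 3, 4}, {0, 2, 3, 4}, {0, 1, 3, 4}, {0, 1, 2, 4}, {0, 1, 2, 3}}

/-- The tetrahedra that are faces of the right-side pentachora: the boundary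
ones together with the ten interior tetrahedra containing vertex 6. -/
def FacesRight : Finset (Finset (Fin 6)) :=
  Bdry ∪ {{0, 1, 2, 5}, {0, 1, 3, 5}, {0, 2, 3, 5}, {1, 2, 3, 5},
          {0, 1, 4, 5}, {0, 2, 4, 5}, {1, 2, 4, 5},
          {0, 3, 4, 5}, {1, 3, 4, 5}, {2, 3, 4, 5}}

/-- The set of permitted colorings of the right side (an assignment to every
tetrahedron that is a face of the right-side pentachora, encoded as a function
vanishing outside `FacesRight`) agreeing with `b` on the boundary `B`. -/
def RightFiber (b : Finset (Fin 6) → ℤ × ℤ) : Set (Finset (Fin 6) → ℤ × ℤ) :=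
  {f | (∀ t ∉ FacesRight, f t = 0) ∧ PermittedRight f ∧ ∀ t ∈ Bdry, f t = b t}

section Aux

private lemma forall_fin5 {P : Fin 5 → Prop} :
    (∀ i, P i) ↔ P 0 ∧ P 1 ∧ P 2 ∧ P 3 ∧ P 4 :=
  ⟨fun h => ⟨h 0, h 1, h 2, h 3, h 4⟩, fun ⟨h0,h1,h2,h3,h4⟩ i => by
    rcases i with ⟨i, hi⟩; interval_cases i <;> assumption⟩

private lemma pF0 (a b c d e : Fin 6) : pentFaces a b c d e 0 = {b, c, d, e} := rfl
private lemma pF1 (a b c d e : Fin 6) : pentFaces a b c d e 1 = {a, c, d, e} := rfl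
private lemma pF2 (a b c d e : Fin 6) : pentFaces a b c d e 2 = {a, b, d, e} := rfl
private lemma pF3 (a b c d e : Fin 6) : pentFaces a b c d e 3 = {a, b, c, e} := rfl
private lemma pF4 (a b c d e : Fin 6) : pentFaces a b c d e 4 = {a, b, c, d} := rfl
private lemma R00 : Rmat 0 0 = 0 := rfl
private lemma R01 : Rmat 0 1 = -2 := rfl
private lemma R02 : Rmat 0 2 = 1 := rfl
private lemma R03 : Rmat 0 3 = 1 := rfl
private lemma R04 : Rmat 0 4 = -2 := rfl
private lemma R10 : Rmat 1 0 = 0 := rfl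
private lemma R11 : Rmat 1 1 = -1 := rfl
private lemma R12 : Rmat 1 2 = 0 := rfl
private lemma R13 : Rmat 1 3 = 1 := rfl
private lemma R14 : Rmat 1 4 = -1 := rfl
private lemma R20 : Rmat 2 0 = -1 := rfl
private lemma R21 : Rmat 2 1 = 2 := rfl
private lemma R22 : Rmat 2 2 = -2 := rfl
private lemma R23 : Rmat 2 3 = 0 := rfl
private lemma R24 : Rmat 2 4 = 1 := rfl
private lemma R30 : Rmat 3 0 = -1 := rfl
private lemma R31 : Rmat 3 1 = 3 := rfl
private lemma R32 : Rmat 3 2 = -2 := rfl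
private lemma R33 : Rmat 3 3 = -1 := rfl
private lemma R34 : Rmat 3 4 = 2 := rfl
private lemma R40 : Rmat 4 0 = 0 := rfl
private lemma R41 : Rmat 4 1 = 1 := rfl
private lemma R42 : Rmat 4 2 = -1 := rfl
private lemma R43 : Rmat 4 3 = 0 := rfl
private lemma R44 : Rmat 4 4 = 0 := rfl

private lemma isPermitted_iff (f : Finset (Fin 6) → ℤ × ℤ) (a b c d e : Fin 6) :
    IsPermitted f a b c d e ↔
      ((f {b, c, d, e}).2 = -2 * (f {a, c, d, e}).1 + (f {a, b, d, e}).1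
          + (f {a, b, c, e}).1 - 2 * (f {a, b, c, d}).1 ∧
       (f {a, c, d, e}).2 = -(f {a, c, d, e}).1 + (f {a, b, c, e}).1 - (f {a, b, c, d}).1 ∧
       (f {a, b, d, e}).2 = -(f {b, c, d, e}).1 + 2 * (f {a, c, d, e}).1
          - 2 * (f {a, b, d, e}).1 + (f {a, b, c, d}).1 ∧
       (f {a, b, c, e}).2 = -(f {b, c, d, e}).1 + 3 * (f {a, c, d, e}).1
          - 2 * (f {a, b, d, e}).1 - (f {a, b, c, e}).1 + 2 * (f {a, b, c, d}).1 ∧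
       (f {a, b, c, d}).2 = (f {a, c, d, e}).1 - (f {a, b, d, e}).1) := by
  simp only [IsPermitted, forall_fin5]
  simp only [Fin.sum_univ_five, pF0, pF1, pF2, pF3, pF4, R00, R01, R02, R03, R04, R10, R11, R12, R13, R14, R20, R21, R22, R23, R24, R30, R31, R32, R33, R34, R40, R41, R42, R43, R44]
  constructor <;> rintro ⟨h0, h1, h2, h3, h4⟩ <;> refine ⟨?_, ?_, ?_, ?_, ?_⟩ <;> omega

/-- The explicit solution of the right-side system. -/
private def gfun (b : Finset (Fin 6) → ℤ × ℤ) (p0 p1 p2 p3 : ℤ) : Finset (Fin 6) → ℤ × ℤ :=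
  fun t =>
    if t = ({1, 2, 3, 4} : Finset (Fin 6)) then b {1, 2, 3, 4}
    else if t = ({0, 2, 3, 4} : Finset (Fin 6)) then b {0, 2, 3, 4}
    else if t = ({0, 1, 3, 4} : Finset (Fin 6)) then b {0, 1, 3, 4}
    else if t = ({0, 1, 2, 4} : Finset (Fin 6)) then b {0, 1, 2, 4}
    else if t = ({0, 1, 2, 3} : Finset (Fin 6)) then b {0, 1, 2, 3}
    else if t = ({0, 1, 2, 5} : Finset (Fin 6)) then (p0 + p2 - (b {1, 2, 3, 4}).1 + 4 * (b {0, 2, 3, 4}).1 - 2 * (b {0, 1, 3, 4}).1 + 3 * (b {0, 1, 2, 3}).1, p1 - p2 + (b {1, 2, 3, 4}).1 - 3 * (b {0, 2, 3, 4}).1 + 2 * (b {0, 1, 3, 4}).1 - 2 * (b {0, 1, 2, 3}).1)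
    else if t = ({0, 1, 3, 5} : Finset (Fin 6)) then (p0 + p3 + (b {0, 1, 3, 4}).1 + (b {0, 1, 2, 4}).1 - (b {0, 1, 2, 3}).1, p1 - p3 - (b {0, 1, 2, 4}).1 + (b {0, 1, 2, 3}).1)
    else if t = ({0, 1, 4, 5} : Finset (Fin 6)) then (p0 + (b {1, 2, 3, 4}).1 - 2 * (b {0, 2, 3, 4}).1 + 2 * (b {0, 1, 3, 4}).1 - (b {0, 1, 2, 3}).1, p1)
    else if t = ({0, 2, 3, 5} : Finset (Fin 6)) then (p0 + p3 + (b {0, 2, 3, 4}).1 + (b {0, 1, 2, 4}).1 - (b {0, 1, 2, 3}).1, p2 - p3 - (b {1, 2, 3, 4}).1 + 3 * (b {0, 2, 3, 4}).1 - 2 * (b {0, 1, 3, 4}).1 - (b {0, 1, 2, 4}).1 + 3 * (b {0, 1, 2, 3}).1)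
    else if t = ({0, 2, 4, 5} : Finset (Fin 6)) then (p0 + (b {0, 2, 3, 4}).1 - (b {0, 1, 2, 4}).1 + (b {0, 1, 2, 3}).1, p2 - (b {1, 2, 3, 4}).1 + 3 * (b {0, 2, 3, 4}).1 - 2 * (b {0, 1, 3, 4}).1 + 2 * (b {0, 1, 2, 3}).1)
    else if t = ({0, 3, 4, 5} : Finset (Fin 6)) then (p0, p3 + (b {0, 1, 2, 4}).1 - (b {0, 1, 2, 3}).1)
    else if t = ({1, 2, 3, 5} : Finset (Fin 6)) then (-p1 + p3 + 2 * (b {0, 2, 3, 4}).1 - 2 * (b {0, 1, 3, 4}).1 + (b {0, 1, 2, 4}).1, p2 - p3 - (b {1, 2, 3, 4}).1 + 2 * (b {0, 2, 3, 4}).1 - (b {0, 1, 3, 4}).1 - (b {0, 1, 2, 4}).1 + 2 * (b {0, 1, 2, 3}).1)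
    else if t = ({1, 2, 4, 5} : Finset (Fin 6)) then (-p1 - 2 * (b {1, 2, 3, 4}).1 + 6 * (b {0, 2, 3, 4}).1 - 4 * (b {0, 1, 3, 4}).1 - (b {0, 1, 2, 4}).1 + 4 * (b {0, 1, 2, 3}).1, p2)
    else if t = ({1, 3, 4, 5} : Finset (Fin 6)) then (-p1 - 2 * (b {1, 2, 3, 4}).1 + 4 * (b {0, 2, 3, 4}).1 - 3 * (b {0, 1, 3, 4}).1 + 2 * (b {0, 1, 2, 3}).1, p3 + (b {1, 2, 3, 4}).1 - 2 * (b {0, 2, 3, 4}).1 + (b {0, 1, 3, 4}).1 + (b {0, 1, 2, 4}).1 - 2 * (b {0, 1, 2, 3}).1)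
    else if t = ({2, 3, 4, 5} : Finset (Fin 6)) then (-p2 + (b {1, 2, 3, 4}).1 - 4 * (b {0, 2, 3, 4}).1 + 2 * (b {0, 1, 3, 4}).1 + 2 * (b {0, 1, 2, 4}).1 - 4 * (b {0, 1, 2, 3}).1, p3)
    else 0

private lemma gev0 (b : Finset (Fin 6) → ℤ × ℤ) (p0 p1 p2 p3 : ℤ) :
    gfun b p0 p1 p2 p3 ({1, 2, 3, 4} : Finset (Fin 6)) = b {1, 2, 3, 4} := by
  simp only [gfun]
  rw [if_pos trivial]

private lemma gev1 (b : Finset (Fin 6) → ℤ × ℤ) (p0 p1 p2 p3 : ℤ) :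
    gfun b p0 p1 p2 p3 ({0, 2, 3, 4} : Finset (Fin 6)) = b {0, 2, 3, 4} := by
  simp only [gfun]
  rw [if_neg (by decide)]
  rw [if_pos trivial]

private lemma gev2 (b : Finset (Fin 6) → ℤ × ℤ) (p0 p1 p2 p3 : ℤ) :
    gfun b p0 p1 p2 p3 ({0, 1, 3, 4} : Finset (Fin 6)) = b {0, 1, 3, 4} := by
  simp only [gfun]
  rw [if_neg (by decide)]
  rw [if_neg (by decide)]
  rw [if_pos trivial]

private lemma gev3 (b : Finset (Fin 6) → ℤ × ℤ) (p0 p1 p2 p3 : ℤ) :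
    gfun b p0 p1 p2 p3 ({0, 1, 2, 4} : Finset (Fin 6)) = b {0, 1, 2, 4} := by
  simp only [gfun]
  rw [if_neg (by decide)]
  rw [if_neg (by decide)]
  rw [if_neg (by decide)]
  rw [if_pos trivial]

private lemma gev4 (b : Finset (Fin 6) → ℤ × ℤ) (p0 p1 p2 p3 : ℤ) :
    gfun b p0 p1 p2 p3 ({0, 1, 2, 3} : Finset (Fin 6)) = b {0, 1, 2, 3} := by
  simp only [gfun]
  rw [if_neg (by decide)]
  rw [if_neg (by decide)]
  rw [if_neg (by decide)]
  rw [if_neg (by decide)]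
  rw [if_pos trivial]

private lemma gev5 (b : Finset (Fin 6) → ℤ × ℤ) (p0 p1 p2 p3 : ℤ) :
    gfun b p0 p1 p2 p3 ({0, 1, 2, 5} : Finset (Fin 6)) = (p0 + p2 - (b {1, 2, 3, 4}).1 + 4 * (b {0, 2, 3, 4}).1 - 2 * (b {0, 1, 3, 4}).1 + 3 * (b {0, 1, 2, 3}).1, p1 - p2 + (b {1, 2, 3, 4}).1 - 3 * (b {0, 2, 3, 4}).1 + 2 * (b {0, 1, 3, 4}).1 - 2 * (b {0, 1, 2, 3}).1) := by
  simp only [gfun]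
  rw [if_neg (by decide)]
  rw [if_neg (by decide)]
  rw [if_neg (by decide)]
  rw [if_neg (by decide)]
  rw [if_neg (by decide)]
  rw [if_pos trivial]

private lemma gev6 (b : Finset (Fin 6) → ℤ × ℤ) (p0 p1 p2 p3 : ℤ) :
    gfun b p0 p1 p2 p3 ({0, 1, 3, 5} : Finset (Fin 6)) = (p0 + p3 + (b {0, 1, 3, 4}).1 + (b {0, 1, 2, 4}).1 - (b {0, 1, 2, 3}).1, p1 - p3 - (b {0, 1, 2, 4}).1 + (b {0, 1, 2, 3}).1) := by
  simp only [gfun]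
  rw [if_neg (by decide)]
  rw [if_neg (by decide)]
  rw [if_neg (by decide)]
  rw [if_neg (by decide)]
  rw [if_neg (by decide)]
  rw [if_neg (by decide)]
  rw [if_pos trivial]

private lemma gev7 (b : Finset (Fin 6) → ℤ × ℤ) (p0 p1 p2 p3 : ℤ) :
    gfun b p0 p1 p2 p3 ({0, 1, 4, 5} : Finset (Fin 6)) = (p0 + (b {1, 2, 3, 4}).1 - 2 * (b {0, 2, 3, 4}).1 + 2 * (b {0, 1, 3, 4}).1 - (b {0, 1, 2, 3}).1, p1) := by
  simp only [gfun]
  rw [if_neg (by decide)]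
  rw [if_neg (by decide)]
  rw [if_neg (by decide)]
  rw [if_neg (by decide)]
  rw [if_neg (by decide)]
  rw [if_neg (by decide)]
  rw [if_neg (by decide)]
  rw [if_pos trivial]

private lemma gev8 (b : Finset (Fin 6) → ℤ × ℤ) (p0 p1 p2 p3 : ℤ) :
    gfun b p0 p1 p2 p3 ({0, 2, 3, 5} : Finset (Fin 6)) = (p0 + p3 + (b {0, 2, 3, 4}).1 + (b {0, 1, 2, 4}).1 - (b {0, 1, 2, 3}).1, p2 - p3 - (b {1, 2, 3, 4}).1 + 3 * (b {0, 2, 3, 4}).1 - 2 * (b {0, 1, 3, 4}).1 - (b {0, 1, 2, 4}).1 + 3 * (b {0, 1, 2, 3}).1) := by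
  simp only [gfun]
  rw [if_neg (by decide)]
  rw [if_neg (by decide)]
  rw [if_neg (by decide)]
  rw [if_neg (by decide)]
  rw [if_neg (by decide)]
  rw [if_neg (by decide)]
  rw [if_neg (by decide)]
  rw [if_neg (by decide)]
  rw [if_pos trivial]

private lemma gev9 (b : Finset (Fin 6) → ℤ × ℤ) (p0 p1 p2 p3 : ℤ) :
    gfun b p0 p1 p2 p3 ({0, 2, 4, 5} : Finset (Fin 6)) = (p0 + (b {0, 2, 3, 4}).1 - (b {0, 1, 2, 4}).1 + (b {0, 1, 2, 3}).1, p2 - (b {1, 2, 3, 4}).1 + 3 * (b {0, 2, 3, 4}).1 - 2 * (b {0, 1, 3, 4}).1 + 2 * (b {0, 1, 2, 3}).1) := by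
  simp only [gfun]
  rw [if_neg (by decide)]
  rw [if_neg (by decide)]
  rw [if_neg (by decide)]
  rw [if_neg (by decide)]
  rw [if_neg (by decide)]
  rw [if_neg (by decide)]
  rw [if_neg (by decide)]
  rw [if_neg (by decide)]
  rw [if_neg (by decide)]
  rw [if_pos trivial]

private lemma gev10 (b : Finset (Fin 6) → ℤ × ℤ) (p0 p1 p2 p3 : ℤ) :
    gfun b p0 p1 p2 p3 ({0, 3, 4, 5} : Finset (Fin 6)) = (p0, p3 + (b {0, 1, 2, 4}).1 - (b {0, 1, 2, 3}).1) := by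
  simp only [gfun]
  rw [if_neg (by decide)]
  rw [if_neg (by decide)]
  rw [if_neg (by decide)]
  rw [if_neg (by decide)]
  rw [if_neg (by decide)]
  rw [if_neg (by decide)]
  rw [if_neg (by decide)]
  rw [if_neg (by decide)]
  rw [if_neg (by decide)]
  rw [if_neg (by decide)]
  rw [if_pos trivial]

private lemma gev11 (b : Finset (Fin 6) → ℤ × ℤ) (p0 p1 p2 p3 : ℤ) :
    gfun b p0 p1 p2 p3 ({1, 2, 3, 5} : Finset (Fin 6)) = (-p1 + p3 + 2 * (b {0, 2, 3, 4}).1 - 2 * (b {0, 1, 3, 4}).1 + (b {0, 1, 2, 4}).1, p2 - p3 - (b {1, 2, 3, 4}).1 + 2 * (b {0, 2, 3, 4}).1 - (b {0, 1, 3, 4}).1 - (b {0, 1, 2, 4}).1 + 2 * (b {0, 1, 2, 3}).1) := by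
  simp only [gfun]
  rw [if_neg (by decide)]
  rw [if_neg (by decide)]
  rw [if_neg (by decide)]
  rw [if_neg (by decide)]
  rw [if_neg (by decide)]
  rw [if_neg (by decide)]
  rw [if_neg (by decide)]
  rw [if_neg (by decide)]
  rw [if_neg (by decide)]
  rw [if_neg (by decide)]
  rw [if_neg (by decide)]
  rw [if_pos trivial]

private lemma gev12 (b : Finset (Fin 6) → ℤ × ℤ) (p0 p1 p2 p3 : ℤ) :
    gfun b p0 p1 p2 p3 ({1, 2, 4, 5} : Finset (Fin 6)) = (-p1 - 2 * (b {1, 2, 3, 4}).1 + 6 * (b {0, 2, 3, 4}).1 - 4 * (b {0, 1, 3, 4}).1 - (b {0, 1, 2, 4}).1 + 4 * (b {0, 1, 2, 3}).1, p2) := by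
  simp only [gfun]
  rw [if_neg (by decide)]
  rw [if_neg (by decide)]
  rw [if_neg (by decide)]
  rw [if_neg (by decide)]
  rw [if_neg (by decide)]
  rw [if_neg (by decide)]
  rw [if_neg (by decide)]
  rw [if_neg (by decide)]
  rw [if_neg (by decide)]
  rw [if_neg (by decide)]
  rw [if_neg (by decide)]
  rw [if_neg (by decide)]
  rw [if_pos trivial]

private lemma gev13 (b : Finset (Fin 6) → ℤ × ℤ) (p0 p1 p2 p3 : ℤ) :
    gfun b p0 p1 p2 p3 ({1, 3, 4, 5} : Finset (Fin 6)) = (-p1 - 2 * (b {1, 2, 3, 4}).1 + 4 * (b {0, 2, 3, 4}).1 - 3 * (b {0, 1, 3, 4}).1 + 2 * (b {0, 1, 2, 3}).1, p3 + (b {1, 2, 3, 4}).1 - 2 * (b {0, 2, 3, 4}).1 + (b {0, 1, 3, 4}).1 + (b {0, 1, 2, 4}).1 - 2 * (b {0, 1, 2, 3}).1) := by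
  simp only [gfun]
  rw [if_neg (by decide)]
  rw [if_neg (by decide)]
  rw [if_neg (by decide)]
  rw [if_neg (by decide)]
  rw [if_neg (by decide)]
  rw [if_neg (by decide)]
  rw [if_neg (by decide)]
  rw [if_neg (by decide)]
  rw [if_neg (by decide)]
  rw [if_neg (by decide)]
  rw [if_neg (by decide)]
  rw [if_neg (by decide)]
  rw [if_neg (by decide)]
  rw [if_pos trivial]

private lemma gev14 (b : Finset (Fin 6) → ℤ × ℤ) (p0 p1 p2 p3 : ℤ) :
    gfun b p0 p1 p2 p3 ({2, 3, 4, 5} : Finset (Fin 6)) = (-p2 + (b {1, 2, 3, 4}).1 - 4 * (b {0, 2, 3, 4}).1 + 2 * (b {0, 1, 3, 4}).1 + 2 * (b {0, 1, 2, 4}).1 - 4 * (b {0, 1, 2, 3}).1, p3) := by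
  simp only [gfun]
  rw [if_neg (by decide)]
  rw [if_neg (by decide)]
  rw [if_neg (by decide)]
  rw [if_neg (by decide)]
  rw [if_neg (by decide)]
  rw [if_neg (by decide)]
  rw [if_neg (by decide)]
  rw [if_neg (by decide)]
  rw [if_neg (by decide)]
  rw [if_neg (by decide)]
  rw [if_neg (by decide)]
  rw [if_neg (by decide)]
  rw [if_neg (by decide)]
  rw [if_neg (by decide)]
  rw [if_pos trivial]

private lemma gev_zero (b : Finset (Fin 6) → ℤ × ℤ) (p0 p1 p2 p3 : ℤ)
    (t : Finset (Fin 6)) (ht : t ∉ FacesRight) : gfun b p0 p1 p2 p3 t = 0 := by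
  simp only [gfun]
  rw [if_neg (by rintro rfl; exact ht (by decide))]
  rw [if_neg (by rintro rfl; exact ht (by decide))]
  rw [if_neg (by rintro rfl; exact ht (by decide))]
  rw [if_neg (by rintro rfl; exact ht (by decide))]
  rw [if_neg (by rintro rfl; exact ht (by decide))]
  rw [if_neg (by rintro rfl; exact ht (by decide))]
  rw [if_neg (by rintro rfl; exact ht (by decide))]
  rw [if_neg (by rintro rfl; exact ht (by decide))]
  rw [if_neg (by rintro rfl; exact ht (by decide))]
  rw [if_neg (by rintro rfl; exact ht (by decide))]
  rw [if_neg (by rintro rfl; exact ht (by decide))]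
  rw [if_neg (by rintro rfl; exact ht (by decide))]
  rw [if_neg (by rintro rfl; exact ht (by decide))]
  rw [if_neg (by rintro rfl; exact ht (by decide))]
  rw [if_neg (by rintro rfl; exact ht (by decide))]

end Aux

set_option maxHeartbeats 1000000 in
/-- For the Pachner move 1–5: for every permitted ℤ-coloring of the single
pentachoron `12345` (given on its five tetrahedra `B`), the set of permitted
colorings of the right side agreeing with it on `B` is in bijection with ℤ⁴
(four additional ℤ-degrees of freedom). -/
theorem pachner_one_five (b : Finset (Fin 6) → ℤ × ℤ)
    (hb : IsPermitted b 0 1 2 3 4) :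
    Nonempty (RightFiber b ≃ (Fin 4 → ℤ)) := by
  obtain ⟨hb0, hb1, hb2, hb3, hb4⟩ := (isPermitted_iff b 0 1 2 3 4).mp hb
  have hmem : ∀ p0 p1 p2 p3 : ℤ, gfun b p0 p1 p2 p3 ∈ RightFiber b := by
    intro p0 p1 p2 p3
    refine ⟨fun t ht => gev_zero b p0 p1 p2 p3 t ht, ?_, ?_⟩
    · refine ⟨?_, ?_, ?_, ?_, ?_⟩ <;> rw [isPermitted_iff] <;>
        simp only [gev0, gev1, gev2, gev3, gev4, gev5, gev6, gev7, gev8, gev9, gev10, gev11, gev12, gev13, gev14] <;>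
        refine ⟨?_, ?_, ?_, ?_, ?_⟩ <;> omega
    · intro t ht
      simp only [Bdry, Finset.mem_insert, Finset.mem_singleton] at ht
      rcases ht with rfl | rfl | rfl | rfl | rfl
      · exact gev0 b p0 p1 p2 p3
      · exact gev1 b p0 p1 p2 p3
      · exact gev2 b p0 p1 p2 p3
      · exact gev3 b p0 p1 p2 p3
      · exact gev4 b p0 p1 p2 p3
  refine ⟨{
    toFun := fun f => ![(f.1 {0, 3, 4, 5}).1, (f.1 {0, 1, 4, 5}).2,
      (f.1 {1, 2, 4, 5}).2, (f.1 {2, 3, 4, 5}).2]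
    invFun := fun p => ⟨gfun b (p 0) (p 1) (p 2) (p 3), hmem _ _ _ _⟩
    left_inv := ?_
    right_inv := ?_ }⟩
  · rintro ⟨f, hf0, ⟨hp0, hp1, hp2, hp3, hp4⟩, hfb⟩
    have e0 := hfb {1, 2, 3, 4} (by decide)
    have e1 := hfb {0, 2, 3, 4} (by decide)
    have e2 := hfb {0, 1, 3, 4} (by decide)
    have e3 := hfb {0, 1, 2, 4} (by decide)
    have e4 := hfb {0, 1, 2, 3} (by decide)
    obtain ⟨q01, q02, q03, q04, q05⟩ := (isPermitted_iff f 0 1 2 3 5).mp hp0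
    obtain ⟨q11, q12, q13, q14, q15⟩ := (isPermitted_iff f 0 1 2 4 5).mp hp1
    obtain ⟨q21, q22, q23, q24, q25⟩ := (isPermitted_iff f 0 1 3 4 5).mp hp2
    obtain ⟨q31, q32, q33, q34, q35⟩ := (isPermitted_iff f 0 2 3 4 5).mp hp3
    obtain ⟨q41, q42, q43, q44, q45⟩ := (isPermitted_iff f 1 2 3 4 5).mp hp4
    have hx0 := congrArg Prod.fst e0
    have hx1 := congrArg Prod.fst e1
    have hx2 := congrArg Prod.fst e2
    have hx3 := congrArg Prod.fst e3
    have hx4 := congrArg Prod.fst e4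
    have hy0 := congrArg Prod.snd e0
    have hy1 := congrArg Prod.snd e1
    have hy2 := congrArg Prod.snd e2
    have hy3 := congrArg Prod.snd e3
    have hy4 := congrArg Prod.snd e4
    apply Subtype.ext
    dsimp only
    simp only [Matrix.cons_val_zero, Matrix.cons_val_one, Matrix.head_cons,
      Matrix.cons_val_two, Matrix.tail_cons, Matrix.cons_val_three]
    funext t
    by_cases ht : t ∈ FacesRight
    · simp only [FacesRight, Bdry, Finset.mem_union, Finset.mem_insert,
        Finset.mem_singleton] at ht
      rcases ht with (rfl | rfl | rfl | rfl | rfl) | rfl | rfl | rfl | rfl | rfl | rfl | rfl | rfl | rfl | rfl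
      · rw [gev0]
        refine Prod.ext ?_ ?_ <;> dsimp -failIfUnchanged only
        · linear_combination (-1 : ℤ) * hx0
        · linear_combination (-1 : ℤ) * hy0
      · rw [gev1]
        refine Prod.ext ?_ ?_ <;> dsimp -failIfUnchanged only
        · linear_combination (-1 : ℤ) * hx1
        · linear_combination (-1 : ℤ) * hy1
      · rw [gev2]
        refine Prod.ext ?_ ?_ <;> dsimp -failIfUnchanged only
        · linear_combination (-1 : ℤ) * hx2
        · linear_combination q02 + (-3 : ℤ) * q03 + (2 : ℤ) * q04 + (-1 : ℤ) * q12 + (3 : ℤ) * q13 + (-2 : ℤ) * q14 + q21 + (-3 : ℤ) * q23 + (3 : ℤ) * q24 + (-1 : ℤ) * q25 + q33 + (-1 : ℤ) * q34 + q35 + (-1 : ℤ) * q42 + (-1 : ℤ) * q45 + hb0 + (-1 : ℤ) * hb1 + hb2 + hx0 + hy0 + (-1 : ℤ) * hx1 + (-1 : ℤ) * hy1 + hx2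
      · rw [gev3]
        refine Prod.ext ?_ ?_ <;> dsimp -failIfUnchanged only
        · linear_combination q13 + (-1 : ℤ) * q23 + (2 : ℤ) * q35 + (-1 : ℤ) * q45 + hb0 + (-2 : ℤ) * hb1 + hy0 + (-2 : ℤ) * hy1 + (-1 : ℤ) * hx2
        · linear_combination q02 + (-3 : ℤ) * q03 + (2 : ℤ) * q04 + (-1 : ℤ) * q12 + (3 : ℤ) * q13 + (-2 : ℤ) * q14 + (-1 : ℤ) * q15 + q21 + (-3 : ℤ) * q23 + (3 : ℤ) * q24 + q33 + (-1 : ℤ) * q34 + (-1 : ℤ) * q42 + (-1 : ℤ) * q45 + hb0 + hb3 + hx0 + hy0 + (-1 : ℤ) * hx1 + hx2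
      · rw [gev4]
        refine Prod.ext ?_ ?_ <;> dsimp -failIfUnchanged only
        · linear_combination (-1 : ℤ) * q02 + q12 + q13 + (-1 : ℤ) * q23 + (-1 : ℤ) * q33 + q34 + q35 + (-1 : ℤ) * q45 + hb0 + (-1 : ℤ) * hb1 + hy0 + hx1 + (-1 : ℤ) * hy1 + (-1 : ℤ) * hx2
        · linear_combination q02 + (-1 : ℤ) * q03 + q04 + (-1 : ℤ) * q05 + (-1 : ℤ) * q12 + q13 + (-1 : ℤ) * q14 + (-1 : ℤ) * q23 + q24 + q33 + (-1 : ℤ) * q34 + hb4 + (-1 : ℤ) * hx1 + hx2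
      · rw [gev5]
        refine Prod.ext ?_ ?_ <;> dsimp only
        · linear_combination q02 + (-3 : ℤ) * q03 + (2 : ℤ) * q04 + q11 + (-1 : ℤ) * q12 + (5 : ℤ) * q13 + (-2 : ℤ) * q14 + q21 + (-5 : ℤ) * q23 + (3 : ℤ) * q24 + q33 + (-1 : ℤ) * q34 + (3 : ℤ) * q35 + (-1 : ℤ) * q42 + (-3 : ℤ) * q45 + (3 : ℤ) * hb0 + (-3 : ℤ) * hb1 + hx0 + (3 : ℤ) * hy0 + (-1 : ℤ) * hx1 + (-3 : ℤ) * hy1 + (-1 : ℤ) * hx2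
        · linear_combination (-1 : ℤ) * q02 + (3 : ℤ) * q03 + (-2 : ℤ) * q04 + (-1 : ℤ) * q11 + q12 + (-3 : ℤ) * q13 + q14 + (-1 : ℤ) * q21 + (4 : ℤ) * q23 + (-3 : ℤ) * q24 + (-1 : ℤ) * q33 + q34 + (-2 : ℤ) * q35 + q42 + (2 : ℤ) * q45 + (-2 : ℤ) * hb0 + (2 : ℤ) * hb1 + (-1 : ℤ) * hx0 + (-2 : ℤ) * hy0 + hx1 + (2 : ℤ) * hy1
      · rw [gev6]
        refine Prod.ext ?_ ?_ <;> dsimp only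
        · linear_combination (-1 : ℤ) * q02 + q03 + (-1 : ℤ) * q04 + q12 + (-1 : ℤ) * q13 + q14 + q23 + (-1 : ℤ) * q24 + q31 + (-1 : ℤ) * q33 + q34 + q35 + (-1 : ℤ) * hb1 + (-1 : ℤ) * hx1 + (-1 : ℤ) * hy1 + (-1 : ℤ) * hx2
        · linear_combination q02 + (-1 : ℤ) * q03 + q04 + (-1 : ℤ) * q12 + q13 + (-1 : ℤ) * q14 + (-1 : ℤ) * q31 + q33 + (-1 : ℤ) * q34 + (-1 : ℤ) * q35 + hb1 + hx1 + hy1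
      · rw [gev8]
        refine Prod.ext ?_ ?_ <;> dsimp only
        · linear_combination q31 + q35 + (-1 : ℤ) * hb1 + (-2 : ℤ) * hx1 + (-1 : ℤ) * hy1
        · linear_combination q02 + (-3 : ℤ) * q03 + (2 : ℤ) * q04 + q11 + (-2 : ℤ) * q12 + (4 : ℤ) * q13 + (-2 : ℤ) * q14 + q21 + (-4 : ℤ) * q23 + (3 : ℤ) * q24 + (-1 : ℤ) * q31 + (2 : ℤ) * q33 + (-2 : ℤ) * q34 + q35 + (-1 : ℤ) * q42 + (-2 : ℤ) * q45 + (2 : ℤ) * hb0 + (-1 : ℤ) * hb1 + hx0 + (2 : ℤ) * hy0 + (-1 : ℤ) * hy1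
      · rw [gev11]
        refine Prod.ext ?_ ?_ <;> dsimp only
        · linear_combination (-2 : ℤ) * q03 + q04 + (2 : ℤ) * q13 + (-1 : ℤ) * q14 + (-3 : ℤ) * q23 + (2 : ℤ) * q24 + q31 + (2 : ℤ) * q35 + (-1 : ℤ) * q45 + hb0 + (-2 : ℤ) * hb1 + hy0 + (-2 : ℤ) * hx1 + (-2 : ℤ) * hy1 + hx2
        · linear_combination (-1 : ℤ) * q01 + (2 : ℤ) * q02 + (-2 : ℤ) * q03 + q04 + q11 + (-2 : ℤ) * q12 + (2 : ℤ) * q13 + (-1 : ℤ) * q14 + q21 + (-2 : ℤ) * q23 + (2 : ℤ) * q24 + (-1 : ℤ) * q31 + (2 : ℤ) * q33 + (-2 : ℤ) * q34 + (-1 : ℤ) * q42 + (-1 : ℤ) * q45 + hb0 + hx0 + hy0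
      · rw [gev7]
        refine Prod.ext ?_ ?_ <;> dsimp only
        · linear_combination (-1 : ℤ) * q02 + (3 : ℤ) * q03 + (-2 : ℤ) * q04 + q12 + (-3 : ℤ) * q13 + (2 : ℤ) * q14 + (-1 : ℤ) * q21 + (3 : ℤ) * q23 + (-3 : ℤ) * q24 + (-1 : ℤ) * q33 + q34 + (-1 : ℤ) * q35 + q42 + q45 + (-1 : ℤ) * hb0 + hb1 + (-1 : ℤ) * hx0 + (-1 : ℤ) * hy0 + hx1 + hy1 + (-1 : ℤ) * hx2
      · rw [gev9]
        refine Prod.ext ?_ ?_ <;> dsimp only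
        · linear_combination (-1 : ℤ) * q35 + hb1 + hy1
        · linear_combination q02 + (-3 : ℤ) * q03 + (2 : ℤ) * q04 + q11 + (-2 : ℤ) * q12 + (4 : ℤ) * q13 + (-2 : ℤ) * q14 + q21 + (-4 : ℤ) * q23 + (3 : ℤ) * q24 + q33 + (-1 : ℤ) * q34 + (2 : ℤ) * q35 + (-1 : ℤ) * q42 + (-2 : ℤ) * q45 + (2 : ℤ) * hb0 + (-2 : ℤ) * hb1 + hx0 + (2 : ℤ) * hy0 + (-1 : ℤ) * hx1 + (-2 : ℤ) * hy1
      · rw [gev12]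
        refine Prod.ext ?_ ?_ <;> dsimp only
        · linear_combination (2 : ℤ) * q02 + (-6 : ℤ) * q03 + (4 : ℤ) * q04 + (-2 : ℤ) * q12 + (6 : ℤ) * q13 + (-4 : ℤ) * q14 + (2 : ℤ) * q21 + (-7 : ℤ) * q23 + (6 : ℤ) * q24 + (2 : ℤ) * q33 + (-2 : ℤ) * q34 + (2 : ℤ) * q35 + (-2 : ℤ) * q42 + (-3 : ℤ) * q45 + (3 : ℤ) * hb0 + (-2 : ℤ) * hb1 + (2 : ℤ) * hx0 + (3 : ℤ) * hy0 + (-2 : ℤ) * hx1 + (-2 : ℤ) * hy1 + hx2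
      · rw [gev10]
        refine Prod.ext ?_ ?_ <;> dsimp only
        · linear_combination (-1 : ℤ) * q02 + q03 + (-1 : ℤ) * q04 + q12 + (-1 : ℤ) * q13 + q14 + (-1 : ℤ) * q22 + q23 + (-1 : ℤ) * q24 + q31 + (-1 : ℤ) * q33 + q34 + q35 + (-1 : ℤ) * hb1 + (-1 : ℤ) * hx1 + (-1 : ℤ) * hy1
      · rw [gev13]
        refine Prod.ext ?_ ?_ <;> dsimp only
        · linear_combination (2 : ℤ) * q02 + (-6 : ℤ) * q03 + (4 : ℤ) * q04 + (-2 : ℤ) * q12 + (6 : ℤ) * q13 + (-4 : ℤ) * q14 + (2 : ℤ) * q21 + (-7 : ℤ) * q23 + (6 : ℤ) * q24 + (2 : ℤ) * q33 + (-2 : ℤ) * q34 + (2 : ℤ) * q35 + (-2 : ℤ) * q42 + (-2 : ℤ) * q45 + (2 : ℤ) * hb0 + (-2 : ℤ) * hb1 + (2 : ℤ) * hx0 + (2 : ℤ) * hy0 + (-2 : ℤ) * hx1 + (-2 : ℤ) * hy1 + hx2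
        · linear_combination (-2 : ℤ) * q02 + (4 : ℤ) * q03 + (-3 : ℤ) * q04 + (2 : ℤ) * q12 + (-4 : ℤ) * q13 + (3 : ℤ) * q14 + (-2 : ℤ) * q21 + (4 : ℤ) * q23 + (-4 : ℤ) * q24 + q31 + (-2 : ℤ) * q33 + (2 : ℤ) * q34 + q42 + q45 + (-1 : ℤ) * hb0 + (-1 : ℤ) * hx0 + (-1 : ℤ) * hy0
      · rw [gev14]
        refine Prod.ext ?_ ?_ <;> dsimp only
        · linear_combination (-1 : ℤ) * q02 + (3 : ℤ) * q03 + (-2 : ℤ) * q04 + (-1 : ℤ) * q11 + (2 : ℤ) * q12 + (-4 : ℤ) * q13 + (2 : ℤ) * q14 + (-1 : ℤ) * q21 + (4 : ℤ) * q23 + (-3 : ℤ) * q24 + (-2 : ℤ) * q33 + q34 + q42 + (2 : ℤ) * q45 + (-2 : ℤ) * hb0 + (-1 : ℤ) * hx0 + (-2 : ℤ) * hy0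
    · rw [gev_zero _ _ _ _ _ t ht, hf0 t ht]
  · intro p
    funext i
    fin_cases i <;>
      simp only [Matrix.cons_val_zero, Matrix.cons_val_one, Matrix.head_cons,
        Matrix.cons_val_two, Matrix.tail_cons, Matrix.cons_val_three,
        gev10, gev7, gev12, gev14] <;> rfl
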